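/- arXiv:1902.10212 — 2 statements merged into one kernel-verified Lean document; each statement's English description precedes it below -/
import Mathlib

section
/- Let λ ≤ μ be regular cardinals with μ λ-closed (i.e., ν^{<λ} < μ for all ν < μ). Then for every λ-directed partial order P and every subset S ⊆ P with |S| < μ, there exists a λ-directed subset T ⊆ P with S ⊆ T and |T| < μ. -/
open Cardinal

noncomputable def dchain {P : Type} (F : Set P → Set P) (c : Cardinal) :
    c.ord.ToType → Set P
  | i => F (⋃ j : Set.Iio i, dchain F c j.1)
  termination_by i => i
  decreasing_by exact j.2

theorem dchain_def {P : Type} (F : Set P → Set P) (c : Cardinal) (i : c.ord.ToType) :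
    dchain F c i = F (⋃ j : Set.Iio i, dchain F c j.1) := by
  rw [dchain]

theorem mk_small_subsets_lt {P : Type} {lam μ : Cardinal}
    (hlam : lam.IsRegular) (hμ : μ.IsRegular) (hlamμ : lam < μ)
    (hclosed : ∀ ν < μ, ν ^< lam < μ) (A : Set P) (hA : #A < μ) :
    #{s : Set P | s ⊆ A ∧ #s < lam} < μ := by
  set ν : Cardinal := max #A ℵ₀ with hν
  have hνμ : ν < μ := max_lt hA (hlam.aleph0_le.trans_lt hlamμ)
  have hpow : ν ^< lam < μ := hclosed ν hνμ
  set e := Ordinal.ToType.mk (o := lam.ord) with he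
  have hcover : {s : Set P | s ⊆ A ∧ #s < lam} ⊆
      ⋃ i : lam.ord.ToType, {s : Set P | s ⊆ A ∧ #s ≤ (e.symm i).1.card} := by
    intro s hs
    have h1 : (#s).ord < lam.ord := Cardinal.ord_lt_ord.2 hs.2
    refine Set.mem_iUnion.2 ⟨e ⟨(#s).ord, h1⟩, hs.1, ?_⟩
    rw [OrderIso.symm_apply_apply]
    simp [Cardinal.card_ord]
  refine ((Cardinal.mk_le_mk_of_subset hcover).trans Cardinal.mk_iUnion_le_sum_mk).trans_lt ?_
  refine Cardinal.sum_lt_of_isRegular hμ (by rwa [Cardinal.mk_ord_toType]) fun i => ?_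
  refine lt_of_le_of_lt ?_ hpow
  have hcard : (e.symm i).1.card < lam := Cardinal.lt_ord.1 (e.symm i).2
  calc #{s : Set P | s ⊆ A ∧ #s ≤ (e.symm i).1.card}
      ≤ ν ^ (e.symm i).1.card := Cardinal.mk_bounded_subset_le A _
    _ ≤ ν ^< lam := Cardinal.le_powerlt ν hcard

/-- Let `λ ≤ μ` be regular cardinals with `μ` `λ`-closed (`ν^{<λ} < μ` for all `ν < μ`).
Then in any `λ`-directed partial order `P`, any subset `S` of cardinality `< μ` can be
completed to a `λ`-directed subset `T ⊇ S` of cardinality `< μ`. -/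
theorem complete_to_directed_subset {P : Type} [PartialOrder P] (lam μ : Cardinal)
    (hlam : lam.IsRegular) (hμ : μ.IsRegular) (hlamμ : lam ≤ μ)
    (hclosed : ∀ ν < μ, ν ^< lam < μ)
    (hdir : ∀ s : Set P, #s < lam → ∃ p : P, ∀ q ∈ s, q ≤ p)
    (S : Set P) (hS : #S < μ) :
    ∃ T : Set P, S ⊆ T ∧ #T < μ ∧
      ∀ Q ⊆ T, #Q < lam → ∃ t ∈ T, ∀ q ∈ Q, q ≤ t := by
  obtain ⟨p0, -⟩ := hdir ∅ (by simpa using hlam.pos)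
  rcases eq_or_lt_of_le hlamμ with rfl | hlt
  · -- case lam = μ
    obtain ⟨p, hp⟩ := hdir S hS
    refine ⟨S ∪ {p}, Set.subset_union_left, ?_, ?_⟩
    · refine (Cardinal.mk_union_le _ _).trans_lt ?_
      exact Cardinal.add_lt_of_lt hμ.aleph0_le hS
        (by simpa using Cardinal.one_lt_aleph0.trans_le hμ.aleph0_le)
    · intro Q hQ _
      refine ⟨p, Set.mem_union_right _ rfl, fun q hq => ?_⟩
      rcases hQ hq with h | h
      · exact hp q h
      · simp only [Set.mem_singleton_iff] at h; subst h; exact le_rfl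
  · -- main case lam < μ
    have hub' : ∀ s : Set P, #s < lam → ∃ p : P, ∀ q ∈ s, q ≤ p := hdir
    classical
    set ubf : Set P → P := fun s => if h : #s < lam then (hub' s h).choose else p0 with hubf_def
    have hub : ∀ s : Set P, #s < lam → ∀ q ∈ s, q ≤ ubf s := by
      intro s h q hq
      simp only [hubf_def, dif_pos h]
      exact (hub' s h).choose_spec q hq
    set F : Set P → Set P :=
      fun A => S ∪ A ∪ ubf '' {s : Set P | s ⊆ A ∧ #s < lam} with hF_def
    have hF : ∀ A, A ⊆ F A := fun A =>
      (Set.subset_union_right (s := S)).trans Set.subset_union_left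
    have hSF : ∀ A, S ⊆ F A := fun A =>
      (Set.subset_union_left (t := A)).trans Set.subset_union_left
    have hlimit : Order.IsSuccLimit lam.ord := Cardinal.isSuccLimit_ord hlam.aleph0_le
    haveI hne : Nonempty lam.ord.ToType :=
      Ordinal.toType_nonempty_iff_ne_zero.2 hlimit.pos.ne'
    set T : Set P := ⋃ i : lam.ord.ToType, dchain F lam i with hT_def
    have hcard : ∀ i, #(dchain F lam i) < μ := by
      intro i
      induction i using WellFoundedLT.induction with
      | _ i IH =>
        rw [dchain_def]
        set U : Set P := ⋃ j : Set.Iio i, dchain F lam j.1 with hU_def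
        have hU : #U < μ := by
          refine Cardinal.mk_iUnion_le_sum_mk.trans_lt
            (Cardinal.sum_lt_of_isRegular hμ ?_ fun j => IH j.1 j.2)
          exact (Cardinal.mk_Iio_ord_toType i).trans hlt
        have himg : #(ubf '' {s : Set P | s ⊆ U ∧ #s < lam}) < μ :=
          Cardinal.mk_image_le.trans_lt
            (mk_small_subsets_lt hlam hμ hlt hclosed U hU)
        refine (Cardinal.mk_union_le _ _).trans_lt
          (Cardinal.add_lt_of_lt hμ.aleph0_le ?_ himg)
        exact (Cardinal.mk_union_le _ _).trans_lt
          (Cardinal.add_lt_of_lt hμ.aleph0_le hS hU)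
    refine ⟨T, ?_, ?_, ?_⟩
    · -- S ⊆ T
      obtain ⟨i0⟩ := hne
      refine Set.Subset.trans ?_ (Set.subset_iUnion (fun i => dchain F lam i) i0)
      rw [dchain_def]
      exact hSF _
    · -- #T < μ
      refine Cardinal.mk_iUnion_le_sum_mk.trans_lt
        (Cardinal.sum_lt_of_isRegular hμ ?_ hcard)
      rwa [Cardinal.mk_ord_toType]
    · -- directedness
      intro Q hQT hQ
      have hex : ∀ q : Q, ∃ i, (q : P) ∈ dchain F lam i := fun q =>
        Set.mem_iUnion.1 (hQT q.2)
      choose idx hidx using hex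
      set e := Ordinal.ToType.mk (o := lam.ord) with he
      set g : Q → Ordinal := fun q => (e.symm (idx q)).1 with hg_def
      have hsup : (⨆ q, g q) < lam.ord :=
        Cardinal.iSup_lt_ord_of_isRegular hlam hQ fun q => (e.symm (idx q)).2
      have hsucc : (⨆ q, g q) + 1 < lam.ord := by
        rw [Ordinal.add_one_eq_succ]
        exact hlimit.succ_lt hsup
      set i1 : lam.ord.ToType := e ⟨(⨆ q, g q) + 1, hsucc⟩ with hi1
      have hlt1 : ∀ q : Q, idx q < i1 := by
        intro q
        have h1 : g q < (⨆ q, g q) + 1 :=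
          (Ordinal.le_iSup g q).trans_lt (by
            rw [Ordinal.add_one_eq_succ]; exact Order.lt_succ _)
        have h2 : e.symm (idx q) < (⟨(⨆ q, g q) + 1, hsucc⟩ : Set.Iio lam.ord) :=
          Subtype.mk_lt_mk.2 h1
        calc idx q = e (e.symm (idx q)) := (e.apply_symm_apply _).symm
          _ < i1 := e.lt_iff_lt.2 h2
      have hQU : Q ⊆ ⋃ j : Set.Iio i1, dchain F lam j.1 := by
        intro x hx
        exact Set.mem_iUnion.2 ⟨⟨idx ⟨x, hx⟩, hlt1 ⟨x, hx⟩⟩, hidx ⟨x, hx⟩⟩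
      refine ⟨ubf Q, ?_, hub Q hQ⟩
      refine Set.mem_iUnion.2 ⟨i1, ?_⟩
      rw [dchain_def]
      exact Set.mem_union_right _ ⟨Q, ⟨hQU, hQ⟩, rfl⟩
end

section
/- Let K be a category equipped with a faithful functor U : K → Set, and fix an object M of K. On pairs (f, a) where f : M → N is a morphism of K and a ∈ U(N), define (f₁, a₁) E (f₂, a₂) iff there exist morphisms g₁ : N₁ → N and g₂ : N₂ → N with g₁ ∘ f₁ = g₂ ∘ f₂ and U(g₁)(a₁) = U(g₂)(a₂). If K has the amalgamation property (every span N₁ ← M' → N₂ can be completed to a commutative square), then E is a transitive relation; since E is also reflexive and symmetric, it is an equivalence relation. -/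
open CategoryTheory

universe u v

/-- A pointed extension of `M`: a morphism `f : M ⟶ N` together with an element
`a ∈ U(N)`, i.e. (a representative of) a Galois type over `M`. -/
structure GPt {K : Type u} [Category.{v} K] (U : K ⥤ Type v) (M : K) where
  N : K
  f : M ⟶ N
  a : U.obj N

/-- The Galois-type relation: `(f₁,a₁) E (f₂,a₂)` iff there is a commutative square
`g₁ ∘ f₁ = g₂ ∘ f₂` with `U(g₁)(a₁) = U(g₂)(a₂)`. -/
def GEquiv {K : Type u} [Category.{v} K] (U : K ⥤ Type v) (M : K)
    (p q : GPt U M) : Prop :=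
  ∃ (R : K) (g₁ : p.N ⟶ R) (g₂ : q.N ⟶ R),
    p.f ≫ g₁ = q.f ≫ g₂ ∧ U.map g₁ p.a = U.map g₂ q.a

namespace GEquiv

variable {K : Type u} [Category.{v} K] {U : K ⥤ Type v} {M : K}

theorem refl (p : GPt U M) : GEquiv U M p p :=
  ⟨p.N, 𝟙 p.N, 𝟙 p.N, rfl, rfl⟩

theorem symm {p q : GPt U M} : GEquiv U M p q → GEquiv U M q p
  | ⟨R, g₁, g₂, hf, ha⟩ => ⟨R, g₂, g₁, hf.symm, ha.symm⟩

/-- The two witnessing squares meet in the middle object `q.N`; amalgamating the span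
`R ← q.N → S` glues them into one square. -/
theorem trans
    (amalg : ∀ {A B C : K} (u : A ⟶ B) (v : A ⟶ C),
      ∃ (D : K) (w : B ⟶ D) (x : C ⟶ D), u ≫ w = v ≫ x)
    {p q r : GPt U M} : GEquiv U M p q → GEquiv U M q r → GEquiv U M p r := by
  rintro ⟨R, g₁, g₂, hf, ha⟩ ⟨S, h₁, h₂, hf', ha'⟩
  obtain ⟨D, w, x, hwx⟩ := amalg g₂ h₁
  refine ⟨D, g₁ ≫ w, h₂ ≫ x, ?_, ?_⟩
  · calc p.f ≫ g₁ ≫ w = q.f ≫ g₂ ≫ w := by rw [reassoc_of% hf]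
      _ = q.f ≫ h₁ ≫ x := by rw [hwx]
      _ = r.f ≫ h₂ ≫ x := by rw [reassoc_of% hf']
  · calc U.map (g₁ ≫ w) p.a = U.map w (U.map g₂ q.a) := by rw [U.map_comp, types_comp_apply, ha]
      _ = U.map x (U.map h₁ q.a) := by rw [← types_comp_apply (U.map g₂), ← U.map_comp, hwx,
          U.map_comp, types_comp_apply]
      _ = U.map (h₂ ≫ x) r.a := by rw [ha', U.map_comp, types_comp_apply]

theorem equivalence
    (amalg : ∀ {A B C : K} (u : A ⟶ B) (v : A ⟶ C),
      ∃ (D : K) (w : B ⟶ D) (x : C ⟶ D), u ≫ w = v ≫ x) :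
    Equivalence (GEquiv U M) :=
  ⟨refl, symm, trans amalg⟩

end GEquiv

theorem gEquiv_equivalence_of_amalgamation_general {K : Type u} [Category.{v} K]
    (U : K ⥤ Type v) (M : K)
    (amalg : ∀ {A B C : K} (u : A ⟶ B) (v : A ⟶ C),
      ∃ (D : K) (w : B ⟶ D) (x : C ⟶ D), u ≫ w = v ≫ x) :
    Transitive (GEquiv U M) ∧ Equivalence (GEquiv U M) :=
  ⟨fun _ _ _ => GEquiv.trans amalg, GEquiv.equivalence amalg⟩

/-- If `K` (with a faithful functor `U : K ⥤ Type`) has the amalgamation property, then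
the Galois-type relation `E` over any object `M` is transitive; since it is also
reflexive and symmetric, it is an equivalence relation. -/
theorem gEquiv_equivalence_of_amalgamation {K : Type u} [Category.{v} K]
    (U : K ⥤ Type v) [U.Faithful] (M : K)
    (amalg : ∀ {A B C : K} (u : A ⟶ B) (v : A ⟶ C),
      ∃ (D : K) (w : B ⟶ D) (x : C ⟶ D), u ≫ w = v ≫ x) :
    Transitive (GEquiv U M) ∧ Equivalence (GEquiv U M) :=
  gEquiv_equivalence_of_amalgamation_general U M amalg
end
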